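/- Let V be a finite type and let Δ be a finite, nontrivial, strongly connected multidigraph on V given by a multiset E of directed edges. Then the following are equivalent: (1) Δ is path-Eulerian (and hence not circuit-Eulerian); (2) there exist vertices b ≠ e such that τ(b) − η(b) = 1 = η(e) − τ(e), and τ(x) = η(x) for every vertex x ∉ {b, e}. -/

import Mathlib

/-- A directed walk from `x` to `y` in the multidigraph with edge multiset `E`:
a nonempty list of edges, each an element of `E`, consecutively linked
(head of each edge equals tail of the next), starting at `x` and ending at `y`. -/
def IsDiwalk {V : Type*} (E : Multiset (V × V)) (x y : V) (L : List (V × V)) : Prop :=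
  L ≠ [] ∧ (∀ e ∈ L, e ∈ E) ∧ L.Chain' (fun e f => e.2 = f.1) ∧
    L.head?.map Prod.fst = some x ∧ L.getLast?.map Prod.snd = some y

/-- An Eulerian dicircuit: a directed trail from some vertex back to itself whose
multiset of entries equals the full edge multiset. -/
def CircuitEulerian {V : Type*} (E : Multiset (V × V)) : Prop :=
  ∃ (v : V) (L : List (V × V)), IsDiwalk E v v L ∧ (L : Multiset (V × V)) = E

/-- An Eulerian dipath: a directed trail between two distinct vertices whose
multiset of entries equals the full edge multiset. -/
def PathEulerian {V : Type*} (E : Multiset (V × V)) : Prop :=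
  ∃ (x y : V), x ≠ y ∧ ∃ L : List (V × V), IsDiwalk E x y L ∧ (L : Multiset (V × V)) = E

/-- Strong connectedness: between every two distinct vertices there are directed
walks both ways. -/
def StronglyConnected {V : Type*} (E : Multiset (V × V)) : Prop :=
  ∀ x y : V, x ≠ y → (∃ L, IsDiwalk E x y L) ∧ (∃ L, IsDiwalk E y x L)

/-- Connectedness: every two distinct vertices are joined by a walk in which each
edge of `E` may be traversed in either direction. -/
def UndirConnected {V : Type*} (E : Multiset (V × V)) : Prop :=
  ∀ x y : V, x ≠ y → Relation.ReflTransGen (fun a b => (a, b) ∈ E ∨ (b, a) ∈ E) x y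

/-- Out-degree: the number of edges (with multiplicity) whose tailpoint is `x`. -/
def outDeg {V : Type*} [DecidableEq V] (E : Multiset (V × V)) (x : V) : ℕ :=
  Multiset.countP (fun e => e.1 = x) E

/-- In-degree: the number of edges (with multiplicity) whose headpoint is `x`. -/
def inDeg {V : Type*} [DecidableEq V] (E : Multiset (V × V)) (x : V) : ℕ :=
  Multiset.countP (fun e => e.2 = x) E

/-!
Adding the edge `(e, b)` turns the degree condition into balance (`τ = η` at every vertex) and
an Eulerian dipath from `b` to `e` into an Eulerian dicircuit through `(e, b)`; so it suffices
that a balanced strongly connected multidigraph has an Eulerian dicircuit. In a balanced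
multidigraph every closed trail that misses some edge can be lengthened: strong connectivity
gives a vertex on it with an unused outgoing edge, the unused edges are again balanced, so a
trail of them from that vertex can only get stuck back at it, and this closed trail is spliced in.
-/

section

variable {V : Type*} {E F : Multiset (V × V)} {x y z : V} {g : V × V} {L M : List (V × V)}

theorem isDiwalk_iff : IsDiwalk E x y L ↔ L ≠ [] ∧ (∀ e ∈ L, e ∈ E) ∧
    L.IsChain (fun e f => e.2 = f.1) ∧
      L.head?.map Prod.fst = some x ∧ L.getLast?.map Prod.snd = some y :=
  Iff.rfl

theorem isDiwalk_cons_iff :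
    IsDiwalk E x z (g :: L) ↔ g.1 = x ∧ g ∈ E ∧ (L = [] ∧ g.2 = z ∨ IsDiwalk E g.2 z L) := by
  cases L with
  | nil => simp [isDiwalk_iff, and_comm, and_assoc]
  | cons h L =>
    simp only [isDiwalk_iff, List.isChain_cons_cons, List.mem_cons, forall_eq_or_imp,
      List.head?_cons, Option.map_some, Option.some.injEq, List.getLast?_cons_cons, ne_eq,
      reduceCtorEq, not_false_eq_true, false_and, false_or, true_and]
    tauto

namespace IsDiwalk

theorem singleton (hg : g ∈ E) : IsDiwalk E g.1 g.2 [g] :=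
  isDiwalk_cons_iff.2 ⟨rfl, hg, .inl ⟨rfl, rfl⟩⟩

theorem append (hL : IsDiwalk E x y L) (hM : IsDiwalk E y z M) : IsDiwalk E x z (L ++ M) := by
  induction L generalizing x with
  | nil => exact absurd rfl hL.1
  | cons g L ih =>
    obtain ⟨rfl, hg, ⟨rfl, rfl⟩ | hL⟩ := isDiwalk_cons_iff.1 hL
    · exact isDiwalk_cons_iff.2 ⟨rfl, hg, .inr hM⟩
    · exact isDiwalk_cons_iff.2 ⟨rfl, hg, .inr (ih hL)⟩

theorem of_append_cons (h : IsDiwalk E x z (L ++ g :: M)) :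
    (L = [] ∧ x = g.1 ∨ IsDiwalk E x g.1 L) ∧ IsDiwalk E g.1 z (g :: M) := by
  induction L generalizing x with
  | nil => exact ⟨.inl ⟨rfl, (isDiwalk_cons_iff.1 h).1.symm⟩, (isDiwalk_cons_iff.1 h).1 ▸ h⟩
  | cons f L ih =>
    obtain ⟨rfl, hf, ⟨hnil, -⟩ | h⟩ := isDiwalk_cons_iff.1 h
    · simp at hnil
    obtain ⟨⟨rfl, hfg⟩ | hL, hM⟩ := ih h
    · exact ⟨.inr (hfg ▸ singleton hf), hM⟩
    · exact ⟨.inr (isDiwalk_cons_iff.2 ⟨rfl, hf, .inr hL⟩), hM⟩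

theorem exists_rotate (h : IsDiwalk E x x L) (hg : g ∈ L) :
    ∃ M, IsDiwalk E g.1 g.1 (g :: M) ∧ (g :: M).Perm L := by
  obtain ⟨A, B, rfl⟩ := List.append_of_mem hg
  obtain ⟨⟨rfl, rfl⟩ | hA, hB⟩ := h.of_append_cons
  · exact ⟨B, hB, .refl _⟩
  · exact ⟨B ++ A, hB.append hA, (List.perm_append_comm.cons g).trans List.perm_middle.symm⟩

theorem of_forall_mem (h : IsDiwalk E x y L) (hF : ∀ g ∈ L, g ∈ F) : IsDiwalk F x y L :=
  ⟨h.1, hF, h.2.2⟩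

theorem exists_fst_notMem_snd_mem (S : Set V) (h : IsDiwalk E x y L) (hx : x ∉ S) (hy : y ∈ S) :
    ∃ g ∈ L, g.1 ∉ S ∧ g.2 ∈ S := by
  induction L generalizing x with
  | nil => exact absurd rfl h.1
  | cons g L ih =>
    obtain ⟨rfl, -, ⟨-, rfl⟩ | h⟩ := isDiwalk_cons_iff.1 h
    · exact ⟨g, List.mem_cons_self, hx, hy⟩
    by_cases hg : g.2 ∈ S
    · exact ⟨g, List.mem_cons_self, hx, hg⟩
    · obtain ⟨f, hf, hfS⟩ := ih h hg
      exact ⟨f, List.mem_cons_of_mem g hf, hfS⟩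

end IsDiwalk

theorem StronglyConnected.mono (h : StronglyConnected E) (hEF : E ⊆ F) : StronglyConnected F :=
  fun x y hxy =>
    have ⟨⟨L, hL⟩, ⟨M, hM⟩⟩ := h x y hxy
    ⟨⟨L, hL.of_forall_mem fun g hg => hEF (hL.2.1 g hg)⟩,
      ⟨M, hM.of_forall_mem fun g hg => hEF (hM.2.1 g hg)⟩⟩

section Balanced

variable [DecidableEq V]

def IsBalanced (E : Multiset (V × V)) : Prop :=
  ∀ v, outDeg E v = inDeg E v

@[simp]
theorem outDeg_cons (v : V) : outDeg (g ::ₘ E) v = outDeg E v + if g.1 = v then 1 else 0 :=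
  Multiset.countP_cons _ _ _

@[simp]
theorem inDeg_cons (v : V) : inDeg (g ::ₘ E) v = inDeg E v + if g.2 = v then 1 else 0 :=
  Multiset.countP_cons _ _ _

theorem outDeg_sub (h : F ≤ E) (v : V) : outDeg (E - F) v = outDeg E v - outDeg F v :=
  Multiset.countP_sub h _

theorem inDeg_sub (h : F ≤ E) (v : V) : inDeg (E - F) v = inDeg E v - inDeg F v :=
  Multiset.countP_sub h _

theorem inDeg_le_of_le (h : F ≤ E) (v : V) : inDeg F v ≤ inDeg E v :=
  Multiset.countP_le_of_le _ h

theorem outDeg_pos {v : V} : 0 < outDeg E v ↔ ∃ g ∈ E, g.1 = v :=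
  Multiset.countP_pos

theorem inDeg_pos {v : V} : 0 < inDeg E v ↔ ∃ g ∈ E, g.2 = v :=
  Multiset.countP_pos

theorem IsBalanced.sub (hE : IsBalanced E) (hF : IsBalanced F) (h : F ≤ E) :
    IsBalanced (E - F) := fun v => by
  rw [outDeg_sub h, inDeg_sub h, hE v, hF v]

theorem isBalanced_cons_iff {b e : V} (hbe : b ≠ e) :
    IsBalanced ((e, b) ::ₘ E) ↔
      (outDeg E b : ℤ) - (inDeg E b : ℤ) = 1 ∧ (inDeg E e : ℤ) - (outDeg E e : ℤ) = 1 ∧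
        ∀ x : V, x ≠ b → x ≠ e → outDeg E x = inDeg E x := by
  simp only [IsBalanced, outDeg_cons, inDeg_cons]
  constructor
  · intro h
    refine ⟨?_, ?_, fun x hxb hxe => ?_⟩
    · have := h b; simp only [hbe.symm, ↓reduceIte, add_zero] at this; omega
    · have := h e; simp only [hbe, ↓reduceIte, add_zero] at this; omega
    · have := h x; simp only [hxb.symm, hxe.symm, ↓reduceIte, add_zero] at this; omega
  · rintro ⟨hb, he, hx⟩ v
    by_cases hvb : v = b
    · subst hvb; simp only [hbe.symm, ↓reduceIte, add_zero]; omega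
    by_cases hve : v = e
    · subst hve; simp only [hbe, ↓reduceIte, add_zero]; omega
    · simp [Ne.symm hvb, Ne.symm hve, hx v hvb hve]

theorem IsDiwalk.isBalanced_cons (h : IsDiwalk E x y L) :
    IsBalanced ((y, x) ::ₘ (L : Multiset (V × V))) := by
  induction L generalizing x with
  | nil => exact absurd rfl h.1
  | cons g L ih =>
    obtain ⟨rfl, -, ⟨rfl, rfl⟩ | h⟩ := isDiwalk_cons_iff.1 h
    · intro v
      simp only [← Multiset.cons_coe, Multiset.coe_nil, outDeg_cons, inDeg_cons]
      simp only [outDeg, inDeg, Multiset.countP_zero]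
      omega
    · intro v
      have := ih h v
      simp only [← Multiset.cons_coe, outDeg_cons, inDeg_cons] at this ⊢
      omega

theorem IsDiwalk.isBalanced_of_closed (h : IsDiwalk E x x L) : IsBalanced (L : Multiset (V × V)) :=
  fun v => by have := h.isBalanced_cons v; simp only [outDeg_cons, inDeg_cons] at this; omega

/-- A trail from `x` to `y ≠ x` has entered `y` once more than it has left it, so in a balanced
multigraph some unused edge leaves `y` and the trail can be extended. -/
theorem exists_closed_trail_of_trail {y : V} {L : List (V × V)} (hF : IsBalanced F)
    (hL : IsDiwalk F x y L) (hLF : (L : Multiset (V × V)) ≤ F) :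
    ∃ C, IsDiwalk F x x C ∧ (C : Multiset (V × V)) ≤ F := by
  by_cases hyx : y = x
  · exact ⟨L, hyx ▸ hL, hLF⟩
  have hout : 0 < outDeg (F - (L : Multiset (V × V))) y := by
    have hbal := hL.isBalanced_cons y
    simp only [outDeg_cons, inDeg_cons, ↓reduceIte, if_neg (Ne.symm hyx)] at hbal
    have := inDeg_le_of_le hLF y
    rw [outDeg_sub hLF, hF y]
    omega
  obtain ⟨g, hg, rfl⟩ := outDeg_pos.1 hout
  have hgL : ((L ++ [g] : List (V × V)) : Multiset (V × V)) ≤ F := by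
    rw [← Multiset.coe_add]
    calc (L : Multiset (V × V)) + [g] ≤ L + (F - (L : Multiset (V × V))) :=
          add_le_add_right (Multiset.singleton_le.2 hg) _
      _ = F := add_tsub_cancel_of_le hLF
  exact exists_closed_trail_of_trail hF
    (hL.append (.singleton (Multiset.mem_of_le tsub_le_self hg))) hgL
termination_by Multiset.card F - L.length
decreasing_by
  have hcard := Multiset.card_le_card hgL
  simp only [Multiset.coe_card, List.length_append, List.length_singleton] at hcard ⊢
  omega

theorem exists_closed_trail (hF : IsBalanced F) (hg : g ∈ F) :
    ∃ C, IsDiwalk F g.1 g.1 C ∧ (C : Multiset (V × V)) ≤ F :=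
  exists_closed_trail_of_trail hF (.singleton hg) (Multiset.singleton_le.2 hg)

theorem StronglyConnected.exists_mem_sub_fst_eq (hsc : StronglyConnected E) (hE : IsBalanced E)
    (hL : IsDiwalk E x x L) (hLE : (L : Multiset (V × V)) ≤ E)
    (hne : (L : Multiset (V × V)) ≠ E) :
    ∃ g₀ ∈ L, ∃ g ∈ E - (L : Multiset (V × V)), g.1 = g₀.1 := by
  set T : Set V := {u | ∃ g ∈ L, g.1 = u}
  obtain ⟨f, hf⟩ := Multiset.exists_mem_of_ne_zero
    (mt tsub_eq_zero_iff_le.1 fun h => hne (le_antisymm hLE h))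
  by_cases hfT : f.1 ∈ T
  · obtain ⟨g₀, hg₀, hg₀f⟩ := hfT
    exact ⟨g₀, hg₀, f, hf, hg₀f.symm⟩
  -- Otherwise a walk from `f.1` back to `L` enters `L` by an edge whose tail is off `L`, hence an
  -- unused edge; balance of the unused edges then gives one leaving its head.
  have hxT : x ∈ T := by
    obtain ⟨g, L', rfl⟩ := List.exists_cons_of_ne_nil hL.1
    exact ⟨g, List.mem_cons_self, (isDiwalk_cons_iff.1 hL).1⟩
  obtain ⟨W, hW⟩ := (hsc f.1 x fun h => hfT (h ▸ hxT)).1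
  obtain ⟨g, hgW, hgT, g₀, hg₀, hg₀g⟩ := hW.exists_fst_notMem_snd_mem T hfT hxT
  have hg : g ∈ E - (L : Multiset (V × V)) := by
    rw [Multiset.mem_sub, Multiset.count_eq_zero.2 fun h => hgT ⟨g, h, rfl⟩, Multiset.count_pos]
    exact hW.2.1 g hgW
  have : 0 < outDeg (E - (L : Multiset (V × V))) g.2 := by
    rw [hE.sub hL.isBalanced_of_closed hLE]
    exact inDeg_pos.2 ⟨g, hg, rfl⟩
  obtain ⟨g', hg', hg'g⟩ := outDeg_pos.1 this
  exact ⟨g₀, hg₀, g', hg', hg'g.trans hg₀g.symm⟩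

theorem circuitEulerian_of_closed_trail {x : V} {L : List (V × V)} (hsc : StronglyConnected E)
    (hE : IsBalanced E) (hL : IsDiwalk E x x L) (hLE : (L : Multiset (V × V)) ≤ E) :
    CircuitEulerian E := by
  by_cases heq : (L : Multiset (V × V)) = E
  · exact ⟨x, L, hL, heq⟩
  obtain ⟨g₀, hg₀, g, hg, hgg₀⟩ := hsc.exists_mem_sub_fst_eq hE hL hLE heq
  obtain ⟨C, hC, hCle⟩ := exists_closed_trail (hE.sub hL.isBalanced_of_closed hLE) hg
  obtain ⟨M, hM, hperm⟩ := hL.exists_rotate hg₀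
  rw [hgg₀] at hC
  have hCM : IsDiwalk E g₀.1 g₀.1 (C ++ g₀ :: M) :=
    (hC.of_forall_mem fun f hf => Multiset.mem_of_le tsub_le_self (hC.2.1 f hf)).append hM
  have hCMle : ((C ++ g₀ :: M : List (V × V)) : Multiset (V × V)) ≤ E := by
    rw [← Multiset.coe_add, Multiset.coe_eq_coe.2 hperm]
    calc (C : Multiset (V × V)) + L ≤ (E - L) + L := add_le_add_left hCle _
      _ = E := tsub_add_cancel_of_le hLE
  exact circuitEulerian_of_closed_trail hsc hE hCM hCMle
termination_by Multiset.card E - L.length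
decreasing_by
  have hcard := Multiset.card_le_card hCMle
  have hC0 := List.length_pos_iff.2 hC.1
  rw [Multiset.coe_card, List.length_append, hperm.length_eq] at hcard
  rw [List.length_append, hperm.length_eq]
  omega

theorem circuitEulerian_of_isBalanced (hsc : StronglyConnected E) (hE : IsBalanced E)
    (hne : E ≠ 0) : CircuitEulerian E :=
  have ⟨_, hg⟩ := Multiset.exists_mem_of_ne_zero hne
  have ⟨_, hC, hCE⟩ := exists_closed_trail hE hg
  circuitEulerian_of_closed_trail hsc hE hC hCE

theorem pathEulerian_of_isBalanced_cons {b e : V} (hbe : b ≠ e) (hsc : StronglyConnected E)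
    (hE : IsBalanced ((e, b) ::ₘ E)) : PathEulerian E := by
  obtain ⟨v, L, hL, hLE⟩ :=
    circuitEulerian_of_isBalanced (hsc.mono (Multiset.subset_cons _ _)) hE Multiset.cons_ne_zero
  obtain ⟨M, hM, hperm⟩ := hL.exists_rotate (g := (e, b))
    (Multiset.mem_coe.1 (hLE ▸ Multiset.mem_cons_self _ _))
  have hME : (M : Multiset (V × V)) = E := by
    rw [← Multiset.cons_inj_right (e, b), Multiset.cons_coe, Multiset.coe_eq_coe.2 hperm, hLE]
  obtain ⟨-, -, ⟨-, hbe'⟩ | hM⟩ := isDiwalk_cons_iff.1 hM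
  · exact absurd hbe' hbe
  exact ⟨b, e, hbe, M, hM.of_forall_mem fun g hg => hME ▸ Multiset.mem_coe.2 hg, hME⟩

end Balanced

end

theorem pathEulerian_iff_degree_condition_general
    {V : Type*} [DecidableEq V] (E : Multiset (V × V))
    (hsc : StronglyConnected E) :
    PathEulerian E ↔
      ∃ b e : V, b ≠ e ∧
        (outDeg E b : ℤ) - (inDeg E b : ℤ) = 1 ∧
        (inDeg E e : ℤ) - (outDeg E e : ℤ) = 1 ∧
        ∀ x : V, x ≠ b → x ≠ e → outDeg E x = inDeg E x := by
  constructor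
  · rintro ⟨x, y, hxy, L, hL, rfl⟩
    exact ⟨x, y, hxy, (isBalanced_cons_iff hxy).1 hL.isBalanced_cons⟩
  · rintro ⟨b, e, hbe, hdeg⟩
    exact pathEulerian_of_isBalanced_cons hbe hsc ((isBalanced_cons_iff hbe).2 hdeg)

/-- **Corollary 6.** A finite, nontrivial, strongly connected multidigraph is
path-Eulerian if and only if there are vertices `b ≠ e` with
`τ(b) − η(b) = 1 = η(e) − τ(e)` and `τ(x) = η(x)` for every other vertex `x`. -/
theorem pathEulerian_iff_degree_condition
    {V : Type*} [Fintype V] [DecidableEq V] (E : Multiset (V × V))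
    (hne : E ≠ 0) (hsc : StronglyConnected E) :
    PathEulerian E ↔
      ∃ b e : V, b ≠ e ∧
        (outDeg E b : ℤ) - (inDeg E b : ℤ) = 1 ∧
        (inDeg E e : ℤ) - (outDeg E e : ℤ) = 1 ∧
        ∀ x : V, x ≠ b → x ≠ e → outDeg E x = inDeg E x :=
  pathEulerian_iff_degree_condition_general E hsc
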